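/- arXiv:2206.05133 — 4 statements merged into one kernel-verified Lean document; each statement's English description precedes it below -/
import Mathlib

section
/- For all ρ, σ ∈ (0,1) and all φ_K, φ_L ∈ ℝ, the flux expression ρ(1-σ)e^{(φ_K-φ_L)/2} - σ(1-ρ)e^{(φ_L-φ_K)/2} equals 2√(η(ρ)η(σ)) · sinh((ξ_K - ξ_L)/2), where ξ_K = log(ρ/(1-ρ)) + φ_K and ξ_L = log(σ/(1-σ)) + φ_L. -/
/-!
Both terms of the flux are positive, say `u` and `v`. Any such difference is
`u - v = 2 √(u v) sinh (log (u / v) / 2)`; here the exponentials cancel in `u v = η(ρ) η(σ)`,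
while `log (u / v)` regroups into `ξ_K - ξ_L`.
-/

open Real

theorem sub_eq_two_mul_sqrt_mul_mul_sinh {u v : ℝ} (hu : 0 < u) (hv : 0 < v) :
    u - v = 2 * √(u * v) * sinh (log (u / v) / 2) := by
  have hfirst : √(u * v) * √(u / v) = u := by
    rw [← sqrt_mul (mul_pos hu hv).le, show u * v * (u / v) = u ^ 2 by field_simp, sqrt_sq hu.le]
  have hsecond : √(u * v) / √(u / v) = v := by
    rw [← sqrt_div (mul_pos hu hv).le, show u * v / (u / v) = v ^ 2 by field_simp, sqrt_sq hv.le]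
  rw [← log_sqrt (div_pos hu hv).le, sinh_log (sqrt_pos.mpr (div_pos hu hv))]
  linear_combination hsecond - hfirst

theorem stmt_3 (ρ σ φK φL : ℝ) (hρ : ρ ∈ Set.Ioo (0:ℝ) 1) (hσ : σ ∈ Set.Ioo (0:ℝ) 1) :
    ρ * (1 - σ) * Real.exp ((φK - φL) / 2) - σ * (1 - ρ) * Real.exp ((φL - φK) / 2) =
      2 * Real.sqrt ((ρ * (1 - ρ)) * (σ * (1 - σ))) *
        Real.sinh (((Real.log (ρ / (1 - ρ)) + φK) - (Real.log (σ / (1 - σ)) + φL)) / 2) := by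
  obtain ⟨hρ, hρ'⟩ := hρ
  obtain ⟨hσ, hσ'⟩ := hσ
  have h1ρ : 0 < 1 - ρ := sub_pos.mpr hρ'
  have h1σ : 0 < 1 - σ := sub_pos.mpr hσ'
  have hexp : exp ((φK - φL) / 2) * exp ((φL - φK) / 2) = 1 := by
    rw [← exp_add, ← exp_zero]
    ring_nf
  have hprod : ρ * (1 - σ) * exp ((φK - φL) / 2) * (σ * (1 - ρ) * exp ((φL - φK) / 2)) =
      ρ * (1 - ρ) * (σ * (1 - σ)) := by
    linear_combination ρ * (1 - σ) * σ * (1 - ρ) * hexp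
  have hlog : log (ρ * (1 - σ) * exp ((φK - φL) / 2) / (σ * (1 - ρ) * exp ((φL - φK) / 2))) =
      log (ρ / (1 - ρ)) + φK - (log (σ / (1 - σ)) + φL) := by
    rw [log_div (by positivity) (by positivity), log_mul (by positivity) (by positivity),
      log_mul (by positivity) (by positivity), log_mul (by positivity) (by positivity),
      log_mul (by positivity) (by positivity), log_exp, log_exp, log_div hρ.ne' h1ρ.ne',
      log_div hσ.ne' h1σ.ne']
    ring
  rw [sub_eq_two_mul_sqrt_mul_mul_sinh (by positivity) (by positivity), hprod, hlog]
end

section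
/- Let Ψ(z) = 2z·arsinh(z/2) - 2√(z²+4) + 4 and Ψ*(s) = 4(cosh(s/2) - 1). Then Ψ* is the Legendre transform of Ψ: for all s ∈ ℝ, Ψ*(s) = sup over z ∈ ℝ of (s·z - Ψ(z)). -/
/-!
Substituting `z = 2 sinh t` turns `s z - Ψ z` into `4 (cosh t + sinh t (s/2 - t) - 1)`.
The tangent line of the convex function `cosh` at `t` lies below its graph, so this is at most
`4 (cosh (s/2) - 1) = Ψstar s`, with equality at `t = s/2`.
-/

noncomputable def Ψ (z : ℝ) : ℝ :=
  2 * z * Real.arsinh (z / 2) - 2 * Real.sqrt (z^2 + 4) + 4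

noncomputable def Ψstar (s : ℝ) : ℝ := 4 * (Real.cosh (s / 2) - 1)

open Real

lemma exp_mul_sub_add_one_le_exp (t u : ℝ) : exp t * (u - t + 1) ≤ exp u := by
  simpa only [← exp_add, add_sub_cancel] using
    mul_le_mul_of_nonneg_left (add_one_le_exp (u - t)) (exp_pos t).le

lemma cosh_add_sinh_mul_sub_le_cosh (t u : ℝ) : cosh t + sinh t * (u - t) ≤ cosh u := by
  have hpos := exp_mul_sub_add_one_le_exp t u
  have hneg := exp_mul_sub_add_one_le_exp (-t) (-u)
  rw [cosh_eq, cosh_eq, sinh_eq]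
  linarith

lemma sqrt_sq_two_mul_sinh_add_four (t : ℝ) : √((2 * sinh t) ^ 2 + 4) = 2 * cosh t := by
  rw [show (2 * sinh t) ^ 2 + 4 = (2 * cosh t) ^ 2 by linear_combination (-4 : ℝ) * cosh_sq t]
  exact sqrt_sq (by positivity)

lemma mul_sub_Ψ_two_mul_sinh (s t : ℝ) :
    s * (2 * sinh t) - Ψ (2 * sinh t) = 4 * (cosh t + sinh t * (s / 2 - t) - 1) := by
  rw [Ψ, sqrt_sq_two_mul_sinh_add_four, mul_div_cancel_left₀ _ two_ne_zero, arsinh_sinh]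
  ring

theorem stmt_6 (s : ℝ) :
    IsLUB (Set.range fun z : ℝ => s * z - Ψ z) (Ψstar s) := by
  refine IsGreatest.isLUB ⟨⟨2 * sinh (s / 2), ?_⟩, ?_⟩
  · simp only [mul_sub_Ψ_two_mul_sinh, sub_self, mul_zero, add_zero, Ψstar]
  · rintro _ ⟨z, rfl⟩
    obtain ⟨t, rfl⟩ : ∃ t, 2 * sinh t = z := ⟨arsinh (z / 2), by rw [sinh_arsinh]; ring⟩
    dsimp only
    rw [Ψstar, mul_sub_Ψ_two_mul_sinh]
    linarith [cosh_add_sinh_mul_sub_le_cosh t (s / 2)]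
end

section
/- With Ψ(z) = 2z·arsinh(z/2) - 2√(z²+4) + 4 and Ψ*(s) = 4(cosh(s/2) - 1), the Young–Fenchel inequality z·s ≤ Ψ(z) + Ψ*(s) holds for all z, s ∈ ℝ, with equality if and only if z = 2 sinh(s/2). -/
open Real

lemma two_mul_cosh_tangent_gap (u t : ℝ) :
    2 * (cosh t - cosh u - sinh u * (t - u)) =
      exp u * (exp (t - u) - (t - u) - 1) + exp (-u) * (exp (u - t) - (u - t) - 1) := by
  have h₁ : exp u * exp (t - u) = exp t := by rw [← exp_add]; ring_nf
  have h₂ : exp (-u) * exp (u - t) = exp (-t) := by rw [← exp_add]; ring_nf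
  rw [cosh_eq, cosh_eq, sinh_eq]
  linear_combination -h₁ - h₂

lemma sinh_mul_sub_le_cosh_sub_cosh (u t : ℝ) : sinh u * (t - u) ≤ cosh t - cosh u := by
  have h₁ : 0 ≤ exp (t - u) - (t - u) - 1 := by linarith [add_one_le_exp (t - u)]
  have h₂ : 0 ≤ exp (u - t) - (u - t) - 1 := by linarith [add_one_le_exp (u - t)]
  nlinarith [two_mul_cosh_tangent_gap u t, exp_pos u, exp_pos (-u)]

lemma sinh_mul_sub_lt_cosh_sub_cosh {u t : ℝ} (h : u ≠ t) :
    sinh u * (t - u) < cosh t - cosh u := by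
  have h₁ : 0 < exp (t - u) - (t - u) - 1 := by
    linarith [add_one_lt_exp (sub_ne_zero.2 h.symm)]
  have h₂ : 0 ≤ exp (u - t) - (u - t) - 1 := by linarith [add_one_le_exp (u - t)]
  nlinarith [two_mul_cosh_tangent_gap u t, exp_pos u, exp_pos (-u)]

lemma Ψ_two_mul_sinh (u : ℝ) : Ψ (2 * sinh u) = 4 * (u * sinh u - cosh u + 1) := by
  have hsqrt : √((2 * sinh u) ^ 2 + 4) = 2 * cosh u := by
    rw [show (2 * sinh u) ^ 2 + 4 = (2 * cosh u) ^ 2 by rw [mul_pow, mul_pow, cosh_sq]; ring]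
    exact sqrt_sq (by positivity)
  rw [Ψ, hsqrt, mul_div_cancel_left₀ _ two_ne_zero, arsinh_sinh]
  ring

lemma Ψ_add_Ψstar_sub_mul (u s : ℝ) :
    Ψ (2 * sinh u) + Ψstar s - 2 * sinh u * s =
      4 * (cosh (s / 2) - cosh u - sinh u * (s / 2 - u)) := by
  rw [Ψ_two_mul_sinh, Ψstar]
  ring

theorem stmt_7 (z s : ℝ) :
    z * s ≤ Ψ z + Ψstar s ∧ (z * s = Ψ z + Ψstar s ↔ z = 2 * Real.sinh (s / 2)) := by
  obtain ⟨u, rfl⟩ : ∃ u, z = 2 * sinh u := ⟨arsinh (z / 2), by rw [sinh_arsinh]; ring⟩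
  have gap := Ψ_add_Ψstar_sub_mul u s
  refine ⟨by linarith [sinh_mul_sub_le_cosh_sub_cosh u (s / 2)], ?_⟩
  rw [mul_right_inj' two_ne_zero, sinh_inj]
  constructor
  · intro h
    by_contra hne
    linarith [sinh_mul_sub_lt_cosh_sub_cosh hne]
  · rintro rfl
    simp only [sub_self, mul_zero] at gap
    linarith
end

section
/- For α > β > 0 and ρ ∈ (0,1), with ξ = log(ρ/(1-ρ)) + φ and ξ^Γ = φ - log(α/β - 1) for φ ∈ ℝ, one has αρ - β = 2√(β(α-β)ρ(1-ρ)) · sinh((ξ - ξ^Γ)/2). In particular (αρ - β)(ξ - ξ^Γ) ≥ 0. -/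
/-!
With `a = (α - β)ρ` and `b = β(1 - ρ)` one has `a - b = αρ - β`, `ab = β(α - β)ρ(1 - ρ)` and
`ξ - ξ^Γ = log (a / b)`. For any `a, b > 0`, writing `a / b = e^{2x}` gives
`a - b = √(ab) (e^x - e^{-x}) = 2 √(ab) sinh x`; the sign statement is the monotonicity of `log`.
-/

open Real

theorem sub_eq_two_mul_sqrt_mul_mul_sinh_half_log_div {a b : ℝ} (ha : 0 < a) (hb : 0 < b) :
    a - b = 2 * √(a * b) * sinh (log (a / b) / 2) := by
  have hab : 0 < a / b := div_pos ha hb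
  rw [← log_sqrt hab.le, sinh_log (sqrt_pos.mpr hab), sqrt_div ha.le, sqrt_mul ha.le]
  have : 0 < √a := sqrt_pos.mpr ha
  have : 0 < √b := sqrt_pos.mpr hb
  field_simp
  rw [sq_sqrt ha.le, sq_sqrt hb.le]

theorem sub_mul_log_div_nonneg {a b : ℝ} (ha : 0 < a) (hb : 0 < b) :
    0 ≤ (a - b) * log (a / b) := by
  rw [log_div ha.ne' hb.ne']
  rcases le_total b a with h | h
  · exact mul_nonneg (sub_nonneg.2 h) (sub_nonneg.2 (log_le_log hb h))
  · exact mul_nonneg_of_nonpos_of_nonpos (sub_nonpos.2 h) (sub_nonpos.2 (log_le_log ha h))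

theorem stmt_10 (α β ρ φ : ℝ) (hβ : 0 < β) (hαβ : β < α) (hρ : ρ ∈ Set.Ioo (0:ℝ) 1) :
    (α * ρ - β =
      2 * Real.sqrt (β * (α - β) * (ρ * (1 - ρ))) *
        Real.sinh (((Real.log (ρ / (1 - ρ)) + φ) - (φ - Real.log (α / β - 1))) / 2)) ∧
    0 ≤ (α * ρ - β) * ((Real.log (ρ / (1 - ρ)) + φ) - (φ - Real.log (α / β - 1))) := by
  obtain ⟨hρ0, hρ1⟩ := hρ
  have ha : 0 < (α - β) * ρ := mul_pos (by linarith) hρ0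
  have hb : 0 < β * (1 - ρ) := mul_pos hβ (by linarith)
  have hodds : 0 < ρ / (1 - ρ) := div_pos hρ0 (by linarith)
  have hodds_Γ : 0 < α / β - 1 := by rw [sub_pos, one_lt_div hβ]; exact hαβ
  have hratio : (α - β) * ρ / (β * (1 - ρ)) = ρ / (1 - ρ) * (α / β - 1) := by
    field_simp [(by linarith : (1 - ρ) ≠ 0)]
  have hlog : (log (ρ / (1 - ρ)) + φ) - (φ - log (α / β - 1)) =
      log ((α - β) * ρ / (β * (1 - ρ))) := by
    rw [hratio, log_mul hodds.ne' hodds_Γ.ne']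
    ring
  have hdiff : α * ρ - β = (α - β) * ρ - β * (1 - ρ) := by ring
  have hprod : β * (α - β) * (ρ * (1 - ρ)) = (α - β) * ρ * (β * (1 - ρ)) := by ring
  rw [hlog, hdiff, hprod]
  exact ⟨sub_eq_two_mul_sqrt_mul_mul_sinh_half_log_div ha hb, sub_mul_log_div_nonneg ha hb⟩
end
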